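/- Let p ∈ (1,2), ε > 0, and k > 0. Define Ψ(k,p,ε) = (1+ε)² + 1 - (1+ε) · [(1 + k² + (1+ε)²k²)(2(p-1)(1+ε)k² + (2-p)(1+(1+ε)²k²))] / [(1+(1+ε)²k²)(1 + (1+ε)²k² + (p-1)k²)]. Then Ψ(k,p,ε) ≥ ε(2+2ε+ε²)/(1+ε) > 0. -/

import Mathlib

/-!
Write `a = 1 + ε`, `A = 1 + a²k²`, `B = A + (p - 1)k²`, and let `X` be the numerator of the fraction
in `Ψ`. Since `ε(2 + 2ε + ε²) = (a - 1)(a² + 1)`, the bound is `(a² + 1) - (a² + 1)/a`, so it amounts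
to `a²X ≤ (a² + 1)AB`. The difference `(a² + 1)AB - a²X` is `A + (p - 1)S`, where `S` is a polynomial in
`a` and `k²` that is a sum of manifestly nonnegative terms.
-/

/-- The rational function `Ψ(k,p,ε)` appearing in the proof of Proposition 3.1. -/
noncomputable def Psi (k p ε : ℝ) : ℝ :=
  (1 + ε) ^ 2 + 1 - (1 + ε) *
    ((1 + k ^ 2 + (1 + ε) ^ 2 * k ^ 2) *
      (2 * (p - 1) * (1 + ε) * k ^ 2 + (2 - p) * (1 + (1 + ε) ^ 2 * k ^ 2))) /
    ((1 + (1 + ε) ^ 2 * k ^ 2) * (1 + (1 + ε) ^ 2 * k ^ 2 + (p - 1) * k ^ 2))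

theorem Psi_numerator_gap_eq (a k p : ℝ) :
    (a ^ 2 + 1) * ((1 + a ^ 2 * k ^ 2) * (1 + a ^ 2 * k ^ 2 + (p - 1) * k ^ 2)) -
        a * ((1 + k ^ 2 + a ^ 2 * k ^ 2) *
          (2 * (p - 1) * a * k ^ 2 + (2 - p) * (1 + a ^ 2 * k ^ 2))) * a =
      (1 + a ^ 2 * k ^ 2) + (p - 1) * (a ^ 2 + k ^ 2 * (a ^ 4 + a ^ 2 * (a - 1) ^ 2 + a ^ 2 + 1) +
        k ^ 4 * (a ^ 2 * (a ^ 2 + 1) * (a - 1) ^ 2)) := by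
  ring

theorem Psi_fraction_le (a k p : ℝ) (ha : 0 < a) (hp : 1 ≤ p) :
    a * ((1 + k ^ 2 + a ^ 2 * k ^ 2) *
        (2 * (p - 1) * a * k ^ 2 + (2 - p) * (1 + a ^ 2 * k ^ 2))) /
      ((1 + a ^ 2 * k ^ 2) * (1 + a ^ 2 * k ^ 2 + (p - 1) * k ^ 2)) ≤ (a ^ 2 + 1) / a := by
  have hp' : 0 ≤ p - 1 := sub_nonneg.mpr hp
  rw [div_le_div_iff₀ (by positivity) ha, ← sub_nonneg, Psi_numerator_gap_eq]
  positivity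

theorem stmt3_general (p ε k : ℝ) (hp1 : 1 < p) (hε : 0 < ε) :
    ε * (2 + 2 * ε + ε ^ 2) / (1 + ε) ≤ Psi k p ε ∧
      0 < ε * (2 + 2 * ε + ε ^ 2) / (1 + ε) := by
  have ha : 0 < 1 + ε := by linarith
  have hbound : ε * (2 + 2 * ε + ε ^ 2) / (1 + ε) =
      (1 + ε) ^ 2 + 1 - ((1 + ε) ^ 2 + 1) / (1 + ε) := by
    field_simp
    ring
  refine ⟨?_, by positivity⟩
  rw [hbound, Psi]
  exact sub_le_sub_left (Psi_fraction_le (1 + ε) k p ha hp1.le) _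

/-- For `p ∈ (1,2)`, `ε > 0`, `k > 0`, one has
`Ψ(k,p,ε) ≥ ε(2+2ε+ε²)/(1+ε) > 0`. -/
theorem stmt3 (p ε k : ℝ) (hp1 : 1 < p) (hp2 : p < 2) (hε : 0 < ε) (hk : 0 < k) :
    ε * (2 + 2 * ε + ε ^ 2) / (1 + ε) ≤ Psi k p ε ∧
      0 < ε * (2 + 2 * ε + ε ^ 2) / (1 + ε) :=
  stmt3_general p ε k hp1 hε
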